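/- If R : E → ℝ is Gâteaux differentiable at e⁰ and satisfies the cancellation condition R(e⁰+εh₁+εh₂) − R(e⁰+εh₁) − R(e⁰+εh₂) + R(e⁰) = o(ε) for all h₁, h₂ together with homogeneity δR(e⁰;th) = t·δR(e⁰;h), then δR(e⁰;·) is additive, i.e., δR(e⁰;h₁+h₂) = δR(e⁰;h₁) + δR(e⁰;h₂). -/
import Mathlib


open Asymptotics

theorem stmt_3 {E : Type*} [NormedAddCommGroup E] [NormedSpace ℝ E]
    (R : E → ℝ) (e0 : E) (δR : E → ℝ)
    (hdiff : ∀ h : E, HasDerivAt (fun ε : ℝ => R (e0 + ε • h)) (δR h) 0)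
    (hcancel : ∀ h₁ h₂ : E,
      (fun ε : ℝ => R (e0 + ε • h₁ + ε • h₂) - R (e0 + ε • h₁) - R (e0 + ε • h₂) + R e0)
        =o[nhds 0] (fun ε : ℝ => ε))
    (hhom : ∀ (t : ℝ) (h : E), δR (t • h) = t * δR h) :
    ∀ h₁ h₂ : E, δR (h₁ + h₂) = δR h₁ + δR h₂ := by
  intro h₁ h₂
  have key : ∀ h : E,
      (fun ε : ℝ => R (e0 + ε • h) - R e0 - ε * δR h) =o[nhds 0] (fun ε : ℝ => ε) := by
    intro h
    have := (hasDerivAt_iff_isLittleO.mp (hdiff h))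
    simpa using this
  set c : ℝ := δR (h₁ + h₂) - δR h₁ - δR h₂ with hc
  have hsum : (fun ε : ℝ => c * ε) =o[nhds 0] (fun ε : ℝ => ε) := by
    have H := ((hcancel h₁ h₂).sub (key (h₁ + h₂))).add ((key h₁).add (key h₂))
    have : (fun ε : ℝ =>
        (R (e0 + ε • h₁ + ε • h₂) - R (e0 + ε • h₁) - R (e0 + ε • h₂) + R e0)
          - (R (e0 + ε • (h₁ + h₂)) - R e0 - ε * δR (h₁ + h₂))
          + ((R (e0 + ε • h₁) - R e0 - ε * δR h₁) + (R (e0 + ε • h₂) - R e0 - ε * δR h₂)))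
        = (fun ε : ℝ => c * ε) := by
      funext ε
      have : e0 + ε • (h₁ + h₂) = e0 + ε • h₁ + ε • h₂ := by
        rw [smul_add, add_assoc]
      rw [this, hc]
      ring
    rwa [this] at H
  by_contra hne
  have hc0 : c ≠ 0 := fun h0 => hne (by rw [hc] at h0; linarith)
  have : (fun ε : ℝ => ε) =o[nhds 0] (fun ε : ℝ => ε) :=
    (isLittleO_const_mul_left_iff hc0).mp hsum
  have hfreq : ∃ᶠ x in nhds (0:ℝ), x ≠ 0 := by
    have : (nhdsWithin (0:ℝ) {(0:ℝ)}ᶜ).NeBot := by infer_instance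
    have h2 : ∃ᶠ x in nhdsWithin (0:ℝ) {(0:ℝ)}ᶜ, x ≠ 0 :=
      Filter.Eventually.frequently
        (Filter.eventually_iff.mpr (self_mem_nhdsWithin))
    exact h2.filter_mono nhdsWithin_le_nhds
  exact isLittleO_irrefl hfreq this
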